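/- For all integers N, m ≥ 1, the operator norm of Id − S induced by the ℓ¹ norm on ℝ^{Π(m)} satisfies: ‖Id − S‖₁ = 2·(1 − N^{(m)}/N^m) if m ≤ N, and ‖Id − S‖₁ = 2 if m > N. -/

import Mathlib

open Finset
open scoped Classical

/-- The resampling matrix `S ∈ ℝ^{Π(m)×Π(m)}`:
`S_{π,σ} = N^{(#π)} / N^{#σ}` if `σ ≤ π`, and `0` otherwise. -/
noncomputable def resampS (N m : ℕ) :
    Matrix (Finpartition (Finset.univ : Finset (Fin m)))
      (Finpartition (Finset.univ : Finset (Fin m))) ℝ :=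
  fun π σ =>
    if σ ≤ π then (N.descFactorial π.parts.card : ℝ) / (N : ℝ) ^ σ.parts.card else 0

/-- The operator norm induced by the `ℓ¹` norm: `‖A‖₁ = sup_{f ≠ 0} ‖Af‖₁ / ‖f‖₁`. -/
noncomputable def opNormL1 {ι : Type*} [Fintype ι] (A : Matrix ι ι ℝ) : ℝ :=
  ⨆ f : {f : ι → ℝ // f ≠ 0},
    (∑ π, |A.mulVec (f : ι → ℝ) π|) / (∑ π, |(f : ι → ℝ) π|)

/-!
A column `σ` of `S` is a probability vector, because a colouring of the blocks of `σ`
with `N` colours is the same as a coarsening `π ≥ σ` (its kernel) together with an injective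
colouring of the blocks of `π`; hence `∑_{π ≥ σ} N^{(#π)} = N^{#σ}`. For a column-stochastic
nonnegative `S`, the `σ`-th column of `Id − S` has `ℓ¹` norm `2 (1 − S_{σσ})`, and the diagonal
`S_{σσ} = N^{(#σ)} / N^{#σ}` decreases in `#σ`, so the maximal column is the one of the finest
partition, with `#σ = m`.
-/

namespace Finpartition

variable {α β : Type*} [Fintype α] [DecidableEq α]

def partOf (P : Finpartition (univ : Finset α)) (x : α) : P.parts :=
  ⟨P.part x, P.part_mem.2 (mem_univ x)⟩

lemma partOf_surjective (P : Finpartition (univ : Finset α)) : Function.Surjective P.partOf := by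
  rintro ⟨b, hb⟩
  obtain ⟨x, hx⟩ := P.nonempty_of_mem_parts hb
  exact ⟨x, Subtype.ext (P.part_eq_of_mem hb hx)⟩

lemma partOf_eq_partOf_iff {P : Finpartition (univ : Finset α)} {x y : α} :
    P.partOf x = P.partOf y ↔ y ∈ P.part x := by
  rw [P.mem_part_iff_part_eq_part (mem_univ y) (mem_univ x), eq_comm, Subtype.ext_iff]
  rfl

lemma le_iff_partOf {σ π : Finpartition (univ : Finset α)} :
    σ ≤ π ↔ ∀ x y, σ.partOf x = σ.partOf y → π.partOf x = π.partOf y := by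
  simp only [partOf_eq_partOf_iff]
  constructor
  · intro h x y hy
    obtain ⟨c, hc, hsub⟩ := h (σ.part_mem.2 (mem_univ x))
    have hx : x ∈ c := hsub (σ.mem_part_self.2 (mem_univ x))
    rw [π.part_eq_of_mem hc hx]
    exact hsub hy
  · intro h b hb
    obtain ⟨x, hx⟩ := σ.nonempty_of_mem_parts hb
    refine ⟨π.part x, π.part_mem.2 (mem_univ x), fun y hy => h x y ?_⟩
    rwa [σ.part_eq_of_mem hb hx]

lemma ext_partOf {π ρ : Finpartition (univ : Finset α)}
    (h : ∀ x y, π.partOf x = π.partOf y ↔ ρ.partOf x = ρ.partOf y) : π = ρ :=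
  le_antisymm (le_iff_partOf.2 fun x y => (h x y).1) (le_iff_partOf.2 fun x y => (h x y).2)

lemma partOf_ofSetoid_eq_iff (s : Setoid α) [DecidableRel s.r] {x y : α} :
    (ofSetoid s).partOf x = (ofSetoid s).partOf y ↔ s x y := by
  rw [partOf_eq_partOf_iff, mem_part_ofSetoid_iff_rel]

noncomputable def coarseningColouring (σ : Finpartition (univ : Finset α))
    (e : Σ π : {π : Finpartition (univ : Finset α) // σ ≤ π}, π.1.parts ↪ β) :
    σ.parts → β :=
  fun b => e.2 (e.1.1.partOf (Function.surjInv σ.partOf_surjective b))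

lemma coarseningColouring_partOf (σ : Finpartition (univ : Finset α))
    {π : Finpartition (univ : Finset α)} (hπ : σ ≤ π) (h : π.parts ↪ β) (x : α) :
    coarseningColouring σ ⟨⟨π, hπ⟩, h⟩ (σ.partOf x) = h (π.partOf x) :=
  congrArg h (le_iff_partOf.1 hπ _ _ (Function.surjInv_eq _ _))

lemma bijective_coarseningColouring (σ : Finpartition (univ : Finset α)) :
    Function.Bijective (coarseningColouring (β := β) σ) := by
  constructor
  · rintro ⟨⟨π, hπ⟩, h⟩ ⟨⟨ρ, hρ⟩, k⟩ heq
    have hcomp : ∀ x, h (π.partOf x) = k (ρ.partOf x) := fun x => by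
      simpa only [coarseningColouring_partOf] using congrFun heq (σ.partOf x)
    obtain rfl : π = ρ := ext_partOf fun x y => by
      rw [← h.injective.eq_iff, ← k.injective.eq_iff, hcomp, hcomp]
    obtain rfl : h = k :=
      DFunLike.coe_injective (π.partOf_surjective.injective_comp_right (funext hcomp))
    rfl
  · intro g
    let f : α → β := g ∘ σ.partOf
    let π := ofSetoid (Setoid.ker f)
    have hπ : ∀ x y, π.partOf x = π.partOf y ↔ f x = f y := fun x y =>
      partOf_ofSetoid_eq_iff _
    have hσπ : σ ≤ π := le_iff_partOf.2 fun x y hxy => (hπ x y).2 (congrArg g hxy)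
    let h : π.parts ↪ β := ⟨fun c => f (Function.surjInv π.partOf_surjective c), fun c d hcd => by
      rwa [← hπ, Function.surjInv_eq π.partOf_surjective,
        Function.surjInv_eq π.partOf_surjective] at hcd⟩
    refine ⟨⟨⟨π, hσπ⟩, h⟩, funext fun b => ?_⟩
    obtain ⟨x, rfl⟩ := σ.partOf_surjective b
    rw [coarseningColouring_partOf]
    exact (hπ _ _).1 (Function.surjInv_eq _ _)

theorem sum_coarser_descFactorial_card_parts (N : ℕ) (σ : Finpartition (univ : Finset α)) :
    ∑ π with σ ≤ π, N.descFactorial #π.parts = N ^ #σ.parts := by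
  calc ∑ π with σ ≤ π, N.descFactorial #π.parts
      = ∑ π : {π : Finpartition (univ : Finset α) // σ ≤ π}, Fintype.card (π.1.parts ↪ Fin N) := by
        rw [sum_subtype (p := (σ ≤ ·)) (F := inferInstance) _ (fun _ => by simp)]
        simp [Fintype.card_embedding_eq]
    _ = Fintype.card (Σ π : {π : Finpartition (univ : Finset α) // σ ≤ π}, π.1.parts ↪ Fin N) :=
        Fintype.card_sigma.symm
    _ = Fintype.card (σ.parts → Fin N) :=
        Fintype.card_of_bijective (bijective_coarseningColouring σ)
    _ = N ^ #σ.parts := by simp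

end Finpartition

section OpNormL1

variable {ι : Type*} [Fintype ι]

lemma sum_abs_mulVec_le_of_sum_abs_col_le {A : Matrix ι ι ℝ} {C : ℝ}
    (hA : ∀ j, ∑ i, |A i j| ≤ C) (f : ι → ℝ) :
    ∑ i, |A.mulVec f i| ≤ C * ∑ j, |f j| :=
  calc ∑ i, |A.mulVec f i|
      ≤ ∑ i, ∑ j, |A i j| * |f j| := by
        gcongr with i
        refine (abs_sum_le_sum_abs _ _).trans_eq ?_
        simp only [abs_mul]
    _ = ∑ j, (∑ i, |A i j|) * |f j| := by
        rw [sum_comm]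
        simp only [sum_mul]
    _ ≤ ∑ j, C * |f j| := by gcongr with j; exact hA j
    _ = C * ∑ j, |f j| := (mul_sum _ _ _).symm

theorem opNormL1_eq_of_isGreatest {A : Matrix ι ι ℝ} {C : ℝ}
    (hC : IsGreatest (Set.range fun j => ∑ i, |A i j|) C) : opNormL1 A = C := by
  obtain ⟨⟨j₀, hj₀⟩, hle⟩ := hC
  have hratio : ∀ f : {f : ι → ℝ // f ≠ 0},
      (∑ i, |A.mulVec (f : ι → ℝ) i|) / (∑ j, |(f : ι → ℝ) j|) ≤ C := by
    rintro ⟨f, hf⟩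
    obtain ⟨j, hj⟩ := Function.ne_iff.1 hf
    have hpos : 0 < ∑ j, |f j| :=
      sum_pos' (fun _ _ => abs_nonneg _) ⟨j, mem_univ j, abs_pos.2 hj⟩
    rw [div_le_iff₀ hpos]
    exact sum_abs_mulVec_le_of_sum_abs_col_le (fun j => hle ⟨j, rfl⟩) f
  let e : {f : ι → ℝ // f ≠ 0} := ⟨Pi.single j₀ 1, by simp⟩
  have : Nonempty {f : ι → ℝ // f ≠ 0} := ⟨e⟩
  refine le_antisymm (ciSup_le hratio) ((le_ciSup ⟨C, Set.forall_mem_range.2 hratio⟩ e).trans' ?_)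
  simp [e, hj₀, Pi.single_apply, apply_ite]

end OpNormL1

theorem sum_abs_one_sub_apply_eq {ι : Type*} [Fintype ι] [DecidableEq ι] {S : Matrix ι ι ℝ}
    {j : ι} (hS : ∀ i, 0 ≤ S i j) (hsum : ∑ i, S i j = 1) :
    ∑ i, |(1 - S) i j| = 2 * (1 - S j j) := by
  have hoff : ∑ i ∈ univ.erase j, |(1 - S) i j| = ∑ i ∈ univ.erase j, S i j :=
    sum_congr rfl fun i hi => by
      rw [Matrix.sub_apply, Matrix.one_apply_ne (ne_of_mem_erase hi), zero_sub, abs_neg,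
        abs_of_nonneg (hS i)]
  have hsplit : S j j + ∑ i ∈ univ.erase j, S i j = 1 := by
    rw [add_sum_erase univ (fun i => S i j) (mem_univ j), hsum]
  have hdiag : |(1 - S) j j| = 1 - S j j := by
    rw [Matrix.sub_apply, Matrix.one_apply_eq, abs_of_nonneg]
    linarith [sum_nonneg fun i (_ : i ∈ univ.erase j) => hS i]
  rw [← add_sum_erase univ (fun i => |(1 - S) i j|) (mem_univ j), hdiag, hoff]
  linarith

theorem antitone_descFactorial_div_pow {N : ℕ} (hN : 0 < N) :
    Antitone fun k => (N.descFactorial k : ℝ) / (N : ℝ) ^ k := by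
  refine antitone_nat_of_succ_le fun k => ?_
  have hN' : (0 : ℝ) < N := by exact_mod_cast hN
  rw [Nat.descFactorial_succ, Nat.cast_mul, pow_succ, mul_comm, mul_div_mul_comm]
  refine mul_le_of_le_one_right (by positivity) ((div_le_one hN').2 ?_)
  exact_mod_cast Nat.sub_le N k

lemma resampS_nonneg (N m : ℕ) (π σ : Finpartition (univ : Finset (Fin m))) :
    0 ≤ resampS N m π σ := by
  unfold resampS
  split_ifs <;> positivity

lemma resampS_self (N m : ℕ) (σ : Finpartition (univ : Finset (Fin m))) :
    resampS N m σ σ = (N.descFactorial #σ.parts : ℝ) / (N : ℝ) ^ #σ.parts := by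
  simp [resampS]

lemma sum_resampS_col {N : ℕ} (hN : 0 < N) (m : ℕ) (σ : Finpartition (univ : Finset (Fin m))) :
    ∑ π, resampS N m π σ = 1 := by
  have hpow : (N : ℝ) ^ #σ.parts ≠ 0 := pow_ne_zero _ (by exact_mod_cast hN.ne')
  simp only [resampS]
  rw [← sum_filter, ← sum_div, ← Nat.cast_sum, Finpartition.sum_coarser_descFactorial_card_parts,
    Nat.cast_pow, div_self hpow]

theorem opNormL1_one_sub_resampS_general (N m : ℕ) (hN : 1 ≤ N) :
    opNormL1 (1 - resampS N m) =
      if m ≤ N then 2 * (1 - (N.descFactorial m : ℝ) / (N : ℝ) ^ m) else 2 := by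
  have hcol : ∀ σ, ∑ π, |(1 - resampS N m) π σ|
      = 2 * (1 - (N.descFactorial #σ.parts : ℝ) / (N : ℝ) ^ #σ.parts) := fun σ => by
    rw [sum_abs_one_sub_apply_eq (resampS_nonneg N m · σ) (sum_resampS_col hN m σ),
      resampS_self]
  have hmax : IsGreatest (Set.range fun σ => ∑ π, |(1 - resampS N m) π σ|)
      (2 * (1 - (N.descFactorial m : ℝ) / (N : ℝ) ^ m)) := by
    refine ⟨⟨⊥, (hcol ⊥).trans (by rw [Finpartition.card_bot, card_univ, Fintype.card_fin])⟩, ?_⟩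
    rintro _ ⟨σ, rfl⟩
    have hσ : #σ.parts ≤ m := by simpa using σ.card_parts_le_card
    have hdiag := antitone_descFactorial_div_pow hN hσ
    exact (hcol σ).trans_le (by dsimp only at hdiag; linarith)
  rw [opNormL1_eq_of_isGreatest hmax]
  split_ifs with hmN
  · rfl
  · simp [Nat.descFactorial_eq_zero_iff_lt.2 (not_le.1 hmN)]

/-- The `ℓ¹`-induced operator norm of `Id − S` equals `2·(1 − N^{(m)}/N^m)` when `m ≤ N`,
and `2` when `m > N`. -/
theorem opNormL1_one_sub_resampS (N m : ℕ) (hN : 1 ≤ N) (hm : 1 ≤ m) :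
    opNormL1 (1 - resampS N m) =
      if m ≤ N then 2 * (1 - (N.descFactorial m : ℝ) / (N : ℝ) ^ m) else 2 :=
  opNormL1_one_sub_resampS_general N m hN
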